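/- For every n ∈ ℕ and all u, v ∈ ℂ with |u|² + |v|² = 1, the matrix Mⁿ(u,v) is unitary, i.e., Mⁿ(u,v) · (Mⁿ(u,v))† = 1. -/

import Mathlib

/-!
`Mrep n u v = D⁻¹ A D` with `D = diag (√C(n,k))`, where the `k`-th column of `A` lists the
coefficients of `Pₖ(X) = (ū - v̄X)ᵏ (v + uX)ⁿ⁻ᵏ`; so unitarity amounts to `A D² Aᴴ = D²`.
Coefficientwise, this is the generating identity
`∑ₖ C(n,k) Pₖ(X) P̄ₖ(Y) = ((ū - v̄X)(u - vY) + (v + uX)(v̄ + ūY))ⁿ`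
`                      = ((|u|² + |v|²)(1 + XY))ⁿ = (1 + XY)ⁿ`.
-/

open Matrix Finset

/-- The polynomial parametrization `U^{(j)}` (with `j = n/2`, index `k = j - m`) of the
spin-`j` rotation matrix, as an `(n+1)×(n+1)` complex matrix depending on `u, v ∈ ℂ`. -/
noncomputable def Mrep (n : ℕ) (u v : ℂ) : Matrix (Fin (n + 1)) (Fin (n + 1)) ℂ :=
  Matrix.of fun k' k =>
    (Real.sqrt ((n.choose (k : ℕ) : ℝ) / (n.choose (k' : ℕ) : ℝ)) : ℂ) *
      ∑ a ∈ Finset.Icc (max 0 ((k : ℕ) - (k' : ℕ))) (min (k : ℕ) (n - (k' : ℕ))),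
        ((k : ℕ).choose a : ℂ) * ((n - (k : ℕ)).choose ((k' : ℕ) + a - (k : ℕ)) : ℂ) *
          (-1 : ℂ) ^ a * u ^ (n - (k' : ℕ) - a) * (starRingEnd ℂ u) ^ ((k : ℕ) - a) *
          v ^ ((k' : ℕ) + a - (k : ℕ)) * (starRingEnd ℂ v) ^ a

open Polynomial ComplexConjugate

namespace Polynomial

variable {R : Type*} [CommSemiring R]

theorem coeff_C_mul_X_add_C_pow (a b : R) (m i : ℕ) :
    ((C a * X + C b) ^ m).coeff i
      = if i ≤ m then (m.choose i : R) * a ^ i * b ^ (m - i) else 0 := by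
  have hterm (j : ℕ) : (C a * X) ^ j * C b ^ (m - j) * (m.choose j : R[X])
      = C ((m.choose j : R) * a ^ j * b ^ (m - j)) * X ^ j := by
    rw [C_mul, C_mul, C_pow, C_pow, C_eq_natCast]; ring
  simp only [add_pow, finsetSum_coeff, hterm, coeff_C_mul_X_pow, Finset.sum_ite_eq,
    Finset.mem_range, Nat.lt_succ_iff]

theorem coeff_linear_pow_mul_linear_pow (r s p q : R) {n k' k : ℕ} (hk' : k' ≤ n)
    (hk : k ≤ n) :
    ((C r * X + C s) ^ k * (C p * X + C q) ^ (n - k)).coeff (n - k')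
      = ∑ a ∈ Icc (max 0 (k - k')) (min k (n - k')),
          (k.choose a : R) * ((n - k).choose (k' + a - k) : R) *
            r ^ a * s ^ (k - a) * p ^ (n - k' - a) * q ^ (k' + a - k) := by
  rw [coeff_mul, Finset.Nat.sum_antidiagonal_eq_sum_range_succ_mk, eq_comm]
  refine sum_subset_zero_on_sdiff (fun a ha => ?_) (fun a ha => ?_) (fun a ha => ?_)
  · simp only [mem_Icc, mem_range] at ha ⊢
    omega
  · simp only [mem_sdiff, mem_range, mem_Icc] at ha
    simp only [coeff_C_mul_X_add_C_pow]
    split_ifs <;> first | simp | omega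
  · rw [mem_Icc] at ha
    rw [coeff_C_mul_X_add_C_pow, coeff_C_mul_X_add_C_pow, if_pos (by omega), if_pos (by omega),
      show n - k - (n - k' - a) = k' + a - k by omega,
      ← Nat.choose_symm_of_eq_add (show n - k = (n - k' - a) + (k' + a - k) by omega)]
    ring

theorem coeff_coeff_C_mul_map_C (P Q : R[X]) (i j : ℕ) :
    ((C P * Q.map C).coeff j).coeff i = P.coeff i * Q.coeff j := by
  rw [coeff_C_mul, coeff_map, coeff_mul_C]

theorem coeff_coeff_C_X_mul_X_add_one_pow (n i j : ℕ) (hj : j ≤ n) :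
    (((C X * X + 1 : R[X][X]) ^ n).coeff j).coeff i = if i = j then (n.choose j : R) else 0 := by
  rw [← C_1, coeff_C_mul_X_add_C_pow, if_pos hj, one_pow, mul_one, ← C_eq_natCast, coeff_C_mul,
    coeff_X_pow]
  split_ifs <;> simp_all

end Polynomial

noncomputable def spinPoly (n k : ℕ) (u v : ℂ) : ℂ[X] :=
  (C (-conj v) * X + C (conj u)) ^ k * (C u * X + C v) ^ (n - k)

noncomputable def spinCoeffMatrix (n : ℕ) (u v : ℂ) : Matrix (Fin (n + 1)) (Fin (n + 1)) ℂ :=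
  of fun k' k => (spinPoly n k u v).coeff (n - k')

noncomputable def sqrtChoose (n : ℕ) (k : Fin (n + 1)) : ℂ :=
  (√(n.choose k : ℝ) : ℂ)

theorem sqrtChoose_ne_zero (n : ℕ) (k : Fin (n + 1)) : sqrtChoose n k ≠ 0 := by
  have : 0 < √(n.choose k : ℝ) := Real.sqrt_pos.2 (mod_cast Nat.choose_pos k.is_le)
  exact Complex.ofReal_ne_zero.2 this.ne'

theorem sqrtChoose_mul_self (n : ℕ) (k : Fin (n + 1)) :
    sqrtChoose n k * sqrtChoose n k = n.choose k := by
  rw [sqrtChoose, ← Complex.ofReal_mul, Real.mul_self_sqrt (Nat.cast_nonneg _),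
    Complex.ofReal_natCast]

theorem conjTranspose_diagonal_sqrtChoose (n : ℕ) :
    (diagonal (sqrtChoose n))ᴴ = diagonal (sqrtChoose n) := by
  rw [diagonal_conjTranspose]
  exact congrArg diagonal (funext fun _ => Complex.conj_ofReal _)

theorem conjTranspose_diagonal_sqrtChoose_inv (n : ℕ) :
    (diagonal (sqrtChoose n)⁻¹)ᴴ = diagonal (sqrtChoose n)⁻¹ := by
  rw [diagonal_conjTranspose]
  exact congrArg diagonal
    (funext fun _ => (star_inv₀ _).trans (congrArg _ (Complex.conj_ofReal _)))

theorem Mrep_eq_diagonal_mul_spinCoeffMatrix_mul_diagonal (n : ℕ) (u v : ℂ) :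
    Mrep n u v
      = diagonal (sqrtChoose n)⁻¹ * spinCoeffMatrix n u v * diagonal (sqrtChoose n) := by
  ext k' k
  rw [mul_diagonal, diagonal_mul, Mrep, spinCoeffMatrix, of_apply, of_apply, spinPoly,
    coeff_linear_pow_mul_linear_pow _ _ _ _ k'.is_le k.is_le, Pi.inv_apply, sqrtChoose,
    sqrtChoose, Real.sqrt_div' _ (Nat.cast_nonneg _), Complex.ofReal_div]
  simp only [mul_sum, sum_mul]
  refine sum_congr rfl fun a _ => ?_
  rw [neg_pow]
  ring

theorem sum_choose_C_spinPoly_mul_map_conj {u v : ℂ} (huv : u * conj u + v * conj v = 1)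
    (n : ℕ) :
    -- in `ℂ[X][X]`, `C X` plays the role of `X` in the generating identity and `X` that of `Y`
    ∑ k ∈ range (n + 1), C (n.choose k * spinPoly n k u v) * ((spinPoly n k u v).map conj).map C
      = (C X * X + 1 : ℂ[X][X]) ^ n := by
  set p : ℂ[X][X] := C (C (-conj v) * X + C (conj u)) * (C (C (-v)) * X + C (C u))
  set q : ℂ[X][X] := C (C u * X + C v) * (C (C (conj u)) * X + C (C (conj v)))
  have hpq : p + q = C X * X + 1 := by
    have hC : (C (C (u * conj u + v * conj v)) : ℂ[X][X]) = 1 := by rw [huv, C_1, C_1]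
    simp only [p, q, map_add, map_mul, map_neg] at hC ⊢
    linear_combination (C X * X + 1 : ℂ[X][X]) * hC
  rw [← hpq, add_pow]
  refine sum_congr rfl fun k _ => ?_
  simp only [p, q, spinPoly, mul_pow, Polynomial.map_mul, Polynomial.map_pow, Polynomial.map_add,
    Polynomial.map_neg, Polynomial.map_C, Polynomial.map_X, map_neg, map_mul, map_pow, map_natCast,
    Complex.conj_conj]
  ring

theorem spinCoeffMatrix_mul_diagonal_choose_mul_conjTranspose {u v : ℂ}
    (huv : u * conj u + v * conj v = 1) (n : ℕ) :
    spinCoeffMatrix n u v * diagonal (fun k : Fin (n + 1) => (n.choose k : ℂ))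
        * (spinCoeffMatrix n u v)ᴴ = diagonal (fun k : Fin (n + 1) => (n.choose k : ℂ)) := by
  ext k' k''
  have hcoeff := congrArg (fun P => (P.coeff (n - k'')).coeff (n - k'))
    (sum_choose_C_spinPoly_mul_map_conj huv n)
  simp only [finsetSum_coeff, coeff_coeff_C_mul_map_C, coeff_natCast_mul, coeff_map,
    coeff_coeff_C_X_mul_X_add_one_pow n _ _ (Nat.sub_le n k'')] at hcoeff
  rw [mul_apply, diagonal_apply]
  simp only [mul_diagonal, conjTranspose_apply, spinCoeffMatrix, of_apply]
  rw [Fin.sum_univ_eq_sum_range (fun k => (spinPoly n k u v).coeff (n - k') * n.choose k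
    * star ((spinPoly n k u v).coeff (n - k'')))]
  rw [Nat.choose_symm k''.is_le] at hcoeff
  convert hcoeff using 1
  · exact sum_congr rfl fun k _ => by rw [Complex.star_def]; ring
  · by_cases hk : k' = k''
    · simp [hk]
    · rw [if_neg hk, if_neg fun h => hk (Fin.ext (by omega))]

theorem Mrep_unitary (n : ℕ) (u v : ℂ)
    (h : ‖u‖ ^ 2 + ‖v‖ ^ 2 = 1) :
    Mrep n u v * (Mrep n u v)ᴴ = 1 := by
  have huv : u * conj u + v * conj v = 1 := by
    rw [Complex.mul_conj', Complex.mul_conj']; exact_mod_cast h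
  calc Mrep n u v * (Mrep n u v)ᴴ
      = diagonal (sqrtChoose n)⁻¹
          * (spinCoeffMatrix n u v * (diagonal (sqrtChoose n) * diagonal (sqrtChoose n))
            * (spinCoeffMatrix n u v)ᴴ) * diagonal (sqrtChoose n)⁻¹ := by
        simp only [Mrep_eq_diagonal_mul_spinCoeffMatrix_mul_diagonal, conjTranspose_mul,
          conjTranspose_diagonal_sqrtChoose, conjTranspose_diagonal_sqrtChoose_inv,
          Matrix.mul_assoc]
    _ = diagonal (sqrtChoose n)⁻¹ * diagonal (fun k : Fin (n + 1) => (n.choose k : ℂ))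
          * diagonal (sqrtChoose n)⁻¹ := by
        simp only [diagonal_mul_diagonal, sqrtChoose_mul_self,
          spinCoeffMatrix_mul_diagonal_choose_mul_conjTranspose huv]
    _ = 1 := by
        rw [diagonal_mul_diagonal, diagonal_mul_diagonal, ← diagonal_one]
        congr 1
        ext k
        rw [← sqrtChoose_mul_self, Pi.inv_apply]
        field_simp [sqrtChoose_ne_zero n k]
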